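/- arXiv:2106.02093 — 4 statements merged into one kernel-verified Lean document; each statement's English description precedes it below -/
import Mathlib

section
/- An equilibrium (S̄, 0, 1-S̄) of the SIR system with S̄ > 1/R is unstable: for any ε > 0 there exists an initial condition within ε of the equilibrium whose trajectory leaves a fixed neighborhood of the equilibrium (because I grows initially since I'(τ) = (R·S(τ) - 1)·I(τ) > 0 while R·S > 1). -/
/-!
Along a trajectory starting at `(S̄, I₀, C₀)`, the removed increment `J = C - C₀` determines
`S = S̄ e^{-RJ}` and, since `S + I + C` is conserved, `I = g(J) := I₀ + S̄ - S̄ e^{-RJ} - J`;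
the system reduces to the scalar equation `J' = g(J)`. For `R S̄ > 1` the function `g` is strictly
concave with `g(0) = I₀ > 0` and `g(log (R S̄) / R) ≥ I₀`, so it stays positive up to a zero
`J∞ > log (R S̄) / R`, which it approaches at most linearly. The travel time `∫₀^J dx / g(x)`
therefore increases to `∞` on `[0, J∞)`, and its inverse is a solution for all `τ ≥ 0` along which
`C - C₀` reaches `log (R S̄) / R`, however small `I₀ > 0` is.
-/

open Set Filter Topology Real

noncomputable def travelTime (g : ℝ → ℝ) (x₀ y : ℝ) : ℝ := ∫ x in x₀..y, (g x)⁻¹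

section SeparationOfVariables

variable {g : ℝ → ℝ} {a b x₀ : ℝ}

theorem hasDerivAt_travelTime (hg : ContinuousOn g (Ioo a b)) (hpos : ∀ x ∈ Ioo a b, 0 < g x)
    (hx₀ : x₀ ∈ Ioo a b) {y : ℝ} (hy : y ∈ Ioo a b) :
    HasDerivAt (travelTime g x₀) (g y)⁻¹ y := by
  have hinv : ContinuousOn (fun x => (g x)⁻¹) (Ioo a b) :=
    hg.inv₀ fun x hx => (hpos x hx).ne'
  exact intervalIntegral.integral_hasDerivAt_right
    ((hinv.mono (ordConnected_Ioo.uIcc_subset hx₀ hy)).intervalIntegrable)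
    (hinv.stronglyMeasurableAtFilter isOpen_Ioo y hy) (hinv.continuousAt (isOpen_Ioo.mem_nhds hy))

theorem strictMonoOn_travelTime (hg : ContinuousOn g (Ioo a b))
    (hpos : ∀ x ∈ Ioo a b, 0 < g x) (hx₀ : x₀ ∈ Ioo a b) :
    StrictMonoOn (travelTime g x₀) (Ioo a b) := by
  have hderiv := fun y (hy : y ∈ Ioo a b) => hasDerivAt_travelTime hg hpos hx₀ hy
  refine strictMonoOn_of_deriv_pos (convex_Ioo a b)
    (fun y hy => (hderiv y hy).continuousAt.continuousWithinAt) fun y hy => ?_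
  rw [interior_Ioo] at hy
  rw [(hderiv y hy).deriv]
  exact inv_pos.mpr (hpos y hy)

theorem exists_travelTime_eq (hg : ContinuousOn g (Ioo a b)) (hpos : ∀ x ∈ Ioo a b, 0 < g x)
    (hx₀ : x₀ ∈ Ioo a b) (hunb : ∀ T, ∃ y ∈ Ico x₀ b, T ≤ travelTime g x₀ y) {a' τ : ℝ}
    (haa' : a < a') (ha'x₀ : a' ≤ x₀) (hτ : travelTime g x₀ a' < τ) :
    ∃ y ∈ Ioo a' b, travelTime g x₀ y = τ := by
  obtain ⟨z, hz, hτz⟩ := hunb τ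
  have hIcc : Icc a' z ⊆ Ioo a b := ordConnected_Ioo.out ⟨haa', ha'x₀.trans_lt hx₀.2⟩
    ⟨hx₀.1.trans_le hz.1, hz.2⟩
  obtain ⟨y, hy, rfl⟩ := intermediate_value_Icc (ha'x₀.trans hz.1)
    (fun x hx => (hasDerivAt_travelTime hg hpos hx₀ (hIcc hx)).continuousAt.continuousWithinAt)
    ⟨hτ.le, hτz⟩
  exact ⟨y, ⟨lt_of_le_of_ne hy.1 (by rintro rfl; exact hτ.false), hy.2.trans_lt hz.2⟩, rfl⟩

theorem exists_hasDerivAt_of_unbounded_travelTime (hg : ContinuousOn g (Ioo a b))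
    (hpos : ∀ x ∈ Ioo a b, 0 < g x) (hx₀ : x₀ ∈ Ioo a b)
    (hunb : ∀ T, ∃ y ∈ Ico x₀ b, T ≤ travelTime g x₀ y) :
    ∃ J : ℝ → ℝ, J 0 = x₀ ∧ (∀ τ ≥ 0, HasDerivAt J (g (J τ)) τ) ∧
      ∀ y ∈ Ico x₀ b, ∃ τ ≥ 0, J τ = y := by
  have hderiv := fun y (hy : y ∈ Ioo a b) => hasDerivAt_travelTime hg hpos hx₀ hy
  have hmono := strictMonoOn_travelTime hg hpos hx₀
  set h := travelTime g x₀
  have hh₀ : h x₀ = 0 := intervalIntegral.integral_same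
  obtain ⟨a', haa', ha'x₀⟩ := exists_between hx₀.1
  have hsub : Ioo a' b ⊆ Ioo a b := Ioo_subset_Ioo_left haa'.le
  have ha' : a' ∈ Ioo a b := ⟨haa', ha'x₀.trans hx₀.2⟩
  have hha' : h a' < 0 := hh₀ ▸ hmono ha' hx₀ ha'x₀
  set J := Function.invFunOn h (Ioo a b)
  have hJh : ∀ y ∈ Ioo a b, J (h y) = y := hmono.injOn.leftInvOn_invFunOn
  have hJ : ∀ τ, h a' < τ → J τ ∈ Ioo a' b ∧ h (J τ) = τ := by
    intro τ hτ
    obtain ⟨y, hy, rfl⟩ := exists_travelTime_eq hg hpos hx₀ hunb haa' ha'x₀.le hτ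
    rw [hJh y (hsub hy)]
    exact ⟨hy, rfl⟩
  have hJmono : MonotoneOn J (Ioi (h a')) := fun τ₁ hτ₁ τ₂ hτ₂ hτ => by
    rwa [← hmono.le_iff_le (hsub (hJ τ₁ hτ₁).1) (hsub (hJ τ₂ hτ₂).1), (hJ τ₁ hτ₁).2,
      (hJ τ₂ hτ₂).2]
  have hJcont : ∀ τ, h a' < τ → ContinuousAt J τ := by
    intro τ hτ
    refine continuousAt_of_monotoneOn_of_image_mem_nhds hJmono (Ioi_mem_nhds hτ)
      (mem_of_superset (isOpen_Ioo.mem_nhds (hJ τ hτ).1) fun y hy => ?_)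
    exact ⟨h y, hmono ha' (hsub hy) hy.1, hJh y (hsub hy)⟩
  refine ⟨J, hh₀ ▸ hJh x₀ hx₀, fun τ hτ => ?_, fun y hy => ?_⟩
  · have hτ' : h a' < τ := hha'.trans_le hτ
    have := HasDerivAt.of_local_left_inverse (hJcont τ hτ')
      (hderiv _ (hsub (hJ τ hτ').1)) (inv_ne_zero (hpos _ (hsub (hJ τ hτ').1)).ne')
      (eventually_of_mem (Ioi_mem_nhds hτ') fun σ hσ => (hJ σ hσ).2)
    rwa [inv_inv] at this
  · have hy' : y ∈ Ioo a b := ⟨hx₀.1.trans_le hy.1, hy.2⟩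
    exact ⟨h y, hh₀ ▸ hmono.monotoneOn hx₀ hy' hy.1, hJh y hy'⟩

theorem exists_le_travelTime_of_le_sub (hx₀b : x₀ < b)
    (hg : ContinuousOn g (Ico x₀ b)) (hpos : ∀ x ∈ Ico x₀ b, 0 < g x)
    (hle : ∀ x ∈ Ico x₀ b, g x ≤ b - x) (T : ℝ) :
    ∃ y ∈ Ico x₀ b, T ≤ travelTime g x₀ y := by
  -- chosen so that `∫ x in x₀..y, (b - x)⁻¹ = log ((b - x₀) / (b - y)) = max T 0`
  set y := b - (b - x₀) * exp (-max T 0)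
  have hexp_le : exp (-max T 0) ≤ 1 := exp_le_one_iff.mpr (by simp)
  have hy : y ∈ Ico x₀ b :=
    ⟨by nlinarith, sub_lt_self _ (mul_pos (sub_pos.mpr hx₀b) (exp_pos _))⟩
  have hsub : uIcc x₀ y ⊆ Ico x₀ b := uIcc_of_le hy.1 ▸ Icc_subset_Ico_right hy.2
  have hcomparison : ∫ x in x₀..y, (b - x)⁻¹ ≤ travelTime g x₀ y := by
    refine intervalIntegral.integral_mono_on hy.1 ?_ ?_ fun x hx => ?_
    · exact ContinuousOn.intervalIntegrable
        (ContinuousOn.inv₀ (by fun_prop) fun x hx => (sub_pos.mpr (hsub hx).2).ne')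
    · exact ContinuousOn.intervalIntegrable
        ((hg.mono hsub).inv₀ fun x hx => (hpos x (hsub hx)).ne')
    · have hx' := hsub (Icc_subset_uIcc hx)
      exact inv_anti₀ (hpos x hx') (hle x hx')
  have hlog : ∫ x in x₀..y, (b - x)⁻¹ = max T 0 := by
    rw [intervalIntegral.integral_comp_sub_left (fun x => x⁻¹) b,
      integral_inv_of_pos (by rw [sub_sub_cancel]; positivity) (sub_pos.mpr hx₀b), sub_sub_cancel,
      div_mul_cancel_left₀ (sub_pos.mpr hx₀b).ne', ← exp_neg, neg_neg, log_exp]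
  exact ⟨y, hy, (le_max_left T 0).trans (hlog ▸ hcomparison)⟩

end SeparationOfVariables

noncomputable def sirInfected (R Sbar I₀ J : ℝ) : ℝ := I₀ + Sbar - Sbar * exp (-R * J) - J

theorem hasDerivAt_sirInfected (R Sbar I₀ J : ℝ) :
    HasDerivAt (sirInfected R Sbar I₀) (R * Sbar * exp (-R * J) - 1) J := by
  have hexp := ((hasDerivAt_id J).const_mul (-R)).exp.const_mul Sbar
  refine (((hasDerivAt_const J (I₀ + Sbar)).sub hexp).sub (hasDerivAt_id J)).congr_deriv ?_
  simp only [id_eq]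
  ring

theorem continuous_sirInfected (R Sbar I₀ : ℝ) : Continuous (sirInfected R Sbar I₀) := by
  unfold sirInfected
  fun_prop

section SIR

variable {R Sbar I₀ : ℝ}

theorem strictConcaveOn_sirInfected (hR : 0 < R) (hS : 0 < Sbar) :
    StrictConcaveOn ℝ univ (sirInfected R Sbar I₀) := by
  refine StrictAntiOn.strictConcaveOn_of_deriv convex_univ
    (continuous_sirInfected R Sbar I₀).continuousOn ?_
  intro x _ y _ hxy
  simp only [(hasDerivAt_sirInfected R Sbar I₀ _).deriv]
  have : exp (-R * y) < exp (-R * x) := exp_lt_exp.mpr (by nlinarith)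
  have := mul_lt_mul_of_pos_left this (mul_pos hR hS)
  linarith

theorem sirInfected_le_sub (hR : 0 ≤ R) (hS : 0 ≤ Sbar) {b x : ℝ}
    (hb : sirInfected R Sbar I₀ b = 0) (hx : x ≤ b) :
    sirInfected R Sbar I₀ x ≤ b - x := by
  have : exp (-R * b) ≤ exp (-R * x) := exp_le_exp.mpr (by nlinarith)
  unfold sirInfected at *
  nlinarith

theorem le_sirInfected_log_div (hR : 0 < R) (hRS : 0 < R * Sbar) :
    I₀ ≤ sirInfected R Sbar I₀ (log (R * Sbar) / R) := by
  have hexp : exp (-R * (log (R * Sbar) / R)) = (R * Sbar)⁻¹ := by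
    rw [neg_mul, mul_div_cancel₀ _ hR.ne', exp_neg, exp_log hRS]
  have hS : Sbar ≠ 0 := right_ne_zero_of_mul hRS.ne'
  have hgap : 0 ≤ (R * Sbar - 1 - log (R * Sbar)) / R :=
    div_nonneg (by linarith [log_le_sub_one_of_pos hRS]) hR.le
  have hgap_eq : (R * Sbar - 1 - log (R * Sbar)) / R =
      Sbar - Sbar * (R * Sbar)⁻¹ - log (R * Sbar) / R := by
    field_simp
  unfold sirInfected
  rw [hexp]
  linarith

theorem exists_sirInfected_eq_zero (hR : 0 < R) (hRS : 1 < R * Sbar) (hI₀ : 0 < I₀) :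
    ∃ b, log (R * Sbar) / R < b ∧ sirInfected R Sbar I₀ b = 0 := by
  set Jt := log (R * Sbar) / R
  have hS : 0 < Sbar := pos_of_mul_pos_right (one_pos.trans hRS) hR.le
  have hJt : 0 < Jt := div_pos (log_pos hRS) hR
  have hpos : 0 < sirInfected R Sbar I₀ Jt :=
    hI₀.trans_le (le_sirInfected_log_div hR (one_pos.trans hRS))
  have hneg : sirInfected R Sbar I₀ (Jt + I₀ + Sbar) < 0 := by
    unfold sirInfected
    nlinarith [exp_pos (-R * (Jt + I₀ + Sbar))]
  obtain ⟨b, hb, hgb⟩ := intermediate_value_Ioo' (by linarith : Jt ≤ Jt + I₀ + Sbar)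
    (continuous_sirInfected R Sbar I₀).continuousOn ⟨hneg, hpos⟩
  exact ⟨b, hb.1, hgb⟩

theorem exists_sir_solution (hR : 0 < R) (hRS : 1 < R * Sbar) (hI₀ : 0 < I₀) (C₀ : ℝ) :
    ∃ S I C : ℝ → ℝ,
      (∀ τ ≥ (0:ℝ), HasDerivAt S (-R * S τ * I τ) τ) ∧
      (∀ τ ≥ (0:ℝ), HasDerivAt I (R * S τ * I τ - I τ) τ) ∧
      (∀ τ ≥ (0:ℝ), HasDerivAt C (I τ) τ) ∧
      S 0 = Sbar ∧ I 0 = I₀ ∧ C 0 = C₀ ∧ ∃ τ ≥ (0:ℝ), C τ = C₀ + log (R * Sbar) / R := by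
  set g := sirInfected R Sbar I₀
  have hcont : Continuous g := continuous_sirInfected R Sbar I₀
  have hS : 0 < Sbar := pos_of_mul_pos_right (one_pos.trans hRS) hR.le
  have hg₀ : g 0 = I₀ := by simp [g, sirInfected]
  obtain ⟨b, hJtb, hb⟩ := exists_sirInfected_eq_zero hR hRS hI₀
  have hJt : 0 < log (R * Sbar) / R := div_pos (log_pos hRS) hR
  have hb₀ : 0 < b := hJt.trans hJtb
  obtain ⟨a, ha₀, hga⟩ : ∃ a < 0, 0 < g a :=
    ((hcont.tendsto 0).eventually (lt_mem_nhds (hg₀ ▸ hI₀))).exists_lt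
  have hpos : ∀ x ∈ Ioo a b, 0 < g x := fun x hx => by
    have := (strictConcaveOn_sirInfected (I₀ := I₀) hR hS).lt_on_openSegment (mem_univ a)
      (mem_univ b) (ha₀.trans hb₀).ne (openSegment_eq_Ioo (ha₀.trans hb₀) ▸ hx)
    rwa [hb, min_eq_right hga.le] at this
  obtain ⟨J, hJ₀, hJ, hJreach⟩ := exists_hasDerivAt_of_unbounded_travelTime hcont.continuousOn
    hpos ⟨ha₀, hb₀⟩ (exists_le_travelTime_of_le_sub hb₀ hcont.continuousOn
      (fun x hx => hpos x ⟨ha₀.trans_le hx.1, hx.2⟩)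
      (fun x hx => sirInfected_le_sub hR.le hS.le hb hx.2.le))
  obtain ⟨τ, hτ, hJτ⟩ := hJreach _ ⟨hJt.le, hJtb⟩
  refine ⟨fun τ => Sbar * exp (-R * J τ), fun τ => g (J τ), fun τ => C₀ + J τ,
    fun τ hτ => ?_, fun τ hτ => ?_, fun τ hτ => (hJ τ hτ).const_add C₀,
    by simp [hJ₀], by simp [hJ₀, hg₀], by simp [hJ₀], τ, hτ, by simp [hJτ]⟩
  · exact (((hJ τ hτ).const_mul (-R)).exp.const_mul Sbar).congr_deriv (by ring)
  · exact ((hasDerivAt_sirInfected R Sbar I₀ (J τ)).comp τ (hJ τ hτ)).congr_deriv (by ring)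

end SIR

theorem sir_equilibrium_unstable_general (R Sbar : ℝ) (hR : 1 < R)
    (hSbar : 1 / R < Sbar) :
    ¬ (∀ ε > (0:ℝ), ∃ δ > (0:ℝ), ∀ S I C : ℝ → ℝ,
        (∀ τ ≥ (0:ℝ), HasDerivAt S (-R * S τ * I τ) τ) →
        (∀ τ ≥ (0:ℝ), HasDerivAt I (R * S τ * I τ - I τ) τ) →
        (∀ τ ≥ (0:ℝ), HasDerivAt C (I τ) τ) →
        ‖((S 0, I 0, C 0) : ℝ × ℝ × ℝ) - (Sbar, 0, 1 - Sbar)‖ < δ →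
        ∀ τ ≥ (0:ℝ), ‖((S τ, I τ, C τ) : ℝ × ℝ × ℝ) - (Sbar, 0, 1 - Sbar)‖ < ε) := by
  intro hstable
  have hR₀ : 0 < R := one_pos.trans hR
  have hRS : 1 < R * Sbar := by rwa [div_lt_iff₀ hR₀, mul_comm] at hSbar
  obtain ⟨δ, hδ, hδstable⟩ := hstable _ (div_pos (log_pos hRS) hR₀)
  obtain ⟨S, I, C, hS, hI, hC, hS₀, hI₀, hC₀, τ, hτ, hCτ⟩ :=
    exists_sir_solution hR₀ hRS (half_pos hδ) (1 - Sbar)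
  have hnear : ‖((S 0, I 0, C 0) : ℝ × ℝ × ℝ) - (Sbar, 0, 1 - Sbar)‖ < δ := by
    rw [hS₀, hI₀, hC₀]
    simp [Prod.norm_def, abs_of_pos hδ, hδ]
  set x : ℝ × ℝ × ℝ := (S τ, I τ, C τ) - (Sbar, 0, 1 - Sbar)
  have hfar : log (R * Sbar) / R ≤ ‖x‖ :=
    calc log (R * Sbar) / R = ‖x.2.2‖ := by
          rw [show x.2.2 = C τ - (1 - Sbar) from rfl, hCτ, add_sub_cancel_left,
            norm_of_nonneg (div_pos (log_pos hRS) hR₀).le]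
      _ ≤ ‖x‖ := (norm_snd_le x.2).trans (norm_snd_le x)
  exact (hδstable S I C hS hI hC hnear τ hτ).not_ge hfar

theorem sir_equilibrium_unstable (R Sbar : ℝ) (hR : 1 < R)
    (hSbar : 1 / R < Sbar) (hSbar1 : Sbar ≤ 1) :
    ¬ (∀ ε > (0:ℝ), ∃ δ > (0:ℝ), ∀ S I C : ℝ → ℝ,
        (∀ τ ≥ (0:ℝ), HasDerivAt S (-R * S τ * I τ) τ) →
        (∀ τ ≥ (0:ℝ), HasDerivAt I (R * S τ * I τ - I τ) τ) →
        (∀ τ ≥ (0:ℝ), HasDerivAt C (I τ) τ) →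
        ‖((S 0, I 0, C 0) : ℝ × ℝ × ℝ) - (Sbar, 0, 1 - Sbar)‖ < δ →
        ∀ τ ≥ (0:ℝ), ‖((S τ, I τ, C τ) : ℝ × ℝ × ℝ) - (Sbar, 0, 1 - Sbar)‖ < ε) :=
  sir_equilibrium_unstable_general R Sbar hR hSbar
end

section
/- The final-size equation s = S₀·exp(-R·(S₀ + I₀ - s)) has a unique solution s ∈ (0, 1/R) whenever R > 0, S₀ > 0, I₀ > 0. -/
/-!
Write `g s = S₀ · exp (-R (S₀ + I₀ - s))`. Since `g s = g t · exp (-R (t - s))` and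
`1 - exp (-y) ≤ y`, we get `g t - g s ≤ R · g t · (t - s)`, so `s ↦ g s - s` is strictly
decreasing wherever `R · g < 1`. That holds on `s ≤ 1 / R`, as `g` is monotone and
`R · g (1 / R) = (x · e^{1 - x}) · e^{-R I₀}` with `x = R S₀`, where `x · e^{1 - x} ≤ 1` and
`e^{-R I₀} < 1`. Since `g 0 > 0` and `g (1 / R) < 1 / R`, the intermediate value theorem gives
exactly one zero on `(0, 1 / R)`.
-/

open Real Set

theorem existsUnique_mem_Ioo_eq_zero_of_strictAntiOn {α δ : Type*}
    [ConditionallyCompleteLinearOrder α] [TopologicalSpace α] [OrderTopology α] [DenselyOrdered α]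
    [LinearOrder δ] [Zero δ]
    [TopologicalSpace δ] [OrderClosedTopology δ] {f : α → δ} {a b : α} (hab : a ≤ b)
    (hf : ContinuousOn f (Icc a b)) (hanti : StrictAntiOn f (Icc a b)) (ha : 0 < f a)
    (hb : f b < 0) : ∃! s, s ∈ Ioo a b ∧ f s = 0 := by
  obtain ⟨s, hs, hfs⟩ := intermediate_value_Ioo' hab hf ⟨hb, ha⟩
  refine ⟨s, ⟨hs, hfs⟩, fun t ⟨ht, hft⟩ => ?_⟩
  exact hanti.injOn (Ioo_subset_Icc_self ht) (Ioo_subset_Icc_self hs) (hft.trans hfs.symm)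

theorem mul_exp_one_sub_le_one (x : ℝ) : x * exp (1 - x) ≤ 1 := by
  have hx : x ≤ exp (x - 1) := by linarith [add_one_le_exp (x - 1)]
  calc x * exp (1 - x) ≤ exp (x - 1) * exp (1 - x) := by gcongr
    _ = 1 := by rw [← exp_add]; simp

noncomputable def finalSizeMap (R S₀ I₀ s : ℝ) : ℝ := S₀ * exp (-R * (S₀ + I₀ - s))

section finalSizeMap

variable {R S₀ I₀ : ℝ}

theorem continuous_finalSizeMap : Continuous (finalSizeMap R S₀ I₀) := by
  unfold finalSizeMap
  fun_prop

theorem finalSizeMap_pos (hS₀ : 0 < S₀) (s : ℝ) : 0 < finalSizeMap R S₀ I₀ s :=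
  mul_pos hS₀ (exp_pos _)

theorem monotone_finalSizeMap (hR : 0 ≤ R) (hS₀ : 0 ≤ S₀) :
    Monotone (finalSizeMap R S₀ I₀) := by
  intro s t hst
  unfold finalSizeMap
  exact mul_le_mul_of_nonneg_left (exp_le_exp.2 (by nlinarith)) hS₀

theorem finalSizeMap_eq_mul_exp (s t : ℝ) :
    finalSizeMap R S₀ I₀ s = finalSizeMap R S₀ I₀ t * exp (-(R * (t - s))) := by
  unfold finalSizeMap
  rw [mul_assoc, ← exp_add]
  ring_nf

theorem mul_finalSizeMap_one_div_lt_one (hR : 0 < R) (hI₀ : 0 < I₀) :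
    R * finalSizeMap R S₀ I₀ (1 / R) < 1 := by
  have hsplit :
      R * finalSizeMap R S₀ I₀ (1 / R) = R * S₀ * exp (1 - R * S₀) * exp (-(R * I₀)) := by
    unfold finalSizeMap
    rw [mul_assoc (R * S₀), ← exp_add]
    field_simp
    ring_nf
  rw [hsplit]
  exact mul_lt_one_of_nonneg_of_lt_one_right (mul_exp_one_sub_le_one _) (exp_pos _).le
    (exp_lt_one_iff.2 (by nlinarith))

theorem finalSizeMap_sub_le (hS₀ : 0 ≤ S₀) (s t : ℝ) :
    finalSizeMap R S₀ I₀ t - finalSizeMap R S₀ I₀ s ≤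
      R * finalSizeMap R S₀ I₀ t * (t - s) := by
  have hexp : 1 - R * (t - s) ≤ exp (-(R * (t - s))) := by
    linarith [add_one_le_exp (-(R * (t - s)))]
  have hg : 0 ≤ finalSizeMap R S₀ I₀ t := by unfold finalSizeMap; positivity
  rw [finalSizeMap_eq_mul_exp s t]
  linarith [mul_le_mul_of_nonneg_left hexp hg]

theorem strictAntiOn_finalSizeMap_sub_self (hR : 0 < R) (hS₀ : 0 ≤ S₀) (hI₀ : 0 < I₀) :
    StrictAntiOn (fun s => finalSizeMap R S₀ I₀ s - s) (Iic (1 / R)) := by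
  intro s _ t ht hst
  have hRg : R * finalSizeMap R S₀ I₀ t < 1 :=
    (mul_le_mul_of_nonneg_left (monotone_finalSizeMap hR.le hS₀ ht) hR.le).trans_lt
      (mul_finalSizeMap_one_div_lt_one hR hI₀)
  have hgrowth := finalSizeMap_sub_le (R := R) (I₀ := I₀) hS₀ s t
  dsimp only
  linarith [mul_pos (sub_pos.2 hRg) (sub_pos.2 hst)]

end finalSizeMap

theorem final_size_unique_solution_general (R S₀ I₀ : ℝ) (hR : 0 < R)
    (hS₀ : S₀ ∈ Set.Ioc (0:ℝ) 1) (hI₀ : I₀ ∈ Set.Ioc (0:ℝ) 1) :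
    ∃! s : ℝ, s ∈ Set.Ioo 0 (1 / R) ∧ s = S₀ * Real.exp (-R * (S₀ + I₀ - s)) := by
  have hanti := (strictAntiOn_finalSizeMap_sub_self hR hS₀.1.le hI₀.1).mono
    (Icc_subset_Iic_self (a := 0))
  have hleft : 0 < finalSizeMap R S₀ I₀ 0 - 0 := by simpa using finalSizeMap_pos hS₀.1 0
  have hright : finalSizeMap R S₀ I₀ (1 / R) - 1 / R < 0 := by
    have := mul_finalSizeMap_one_div_lt_one (S₀ := S₀) hR hI₀.1
    rw [sub_neg, lt_div_iff₀ hR]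
    linarith
  have hunique := existsUnique_mem_Ioo_eq_zero_of_strictAntiOn
    (f := fun s => finalSizeMap R S₀ I₀ s - s) (by positivity)
    (continuous_finalSizeMap.sub continuous_id).continuousOn hanti hleft hright
  refine (existsUnique_congr fun s => ?_).1 hunique
  rw [sub_eq_zero, eq_comm]
  rfl

theorem final_size_unique_solution (R S₀ I₀ : ℝ) (hR : 0 < R)
    (hS₀ : S₀ ∈ Set.Ioc (0:ℝ) 1) (hI₀ : I₀ ∈ Set.Ioc (0:ℝ) 1)
    (hsum : S₀ + I₀ ≤ 1) :
    ∃! s : ℝ, s ∈ Set.Ioo 0 (1 / R) ∧ s = S₀ * Real.exp (-R * (S₀ + I₀ - s)) :=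
  final_size_unique_solution_general R S₀ I₀ hR hS₀ hI₀
end

section
/- As R → ∞ with fixed S₀ > 0 and I₀ > 0, the final susceptible fraction tends to zero: lim_{R→∞} -W(-R·S₀·e^{-R·(S₀+I₀)})/R = 0. -/
open Filter Topology Real Set

/-! For large `R` the argument `-R S₀ e^{-R (S₀ + I₀)}` tends to `0` from below, so it eventually lies
in `(-e⁻¹, 0)`, where `W` takes values in `(-1, 0)`. Hence the numerator `-W(⋯)` stays in `(0, 1)`
while the denominator `R` tends to infinity. -/

theorem tendsto_mul_mul_exp_neg_mul_atTop_nhds_zero (a : ℝ) {b : ℝ} (hb : 0 < b) :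
    Tendsto (fun x : ℝ => x * a * exp (-x * b)) atTop (𝓝 0) := by
  have h := (tendsto_rpow_mul_exp_neg_mul_atTop_nhds_zero 1 b hb).const_mul a
  rw [mul_zero] at h
  refine h.congr fun x => ?_
  rw [rpow_one]
  ring_nf

theorem tendsto_neg_mul_mul_exp_neg_mul_atTop_nhdsLT_zero {a b : ℝ} (ha : 0 < a) (hb : 0 < b) :
    Tendsto (fun x : ℝ => -x * a * exp (-x * b)) atTop (𝓝[<] 0) := by
  refine tendsto_nhdsWithin_iff.mpr ⟨?_, ?_⟩
  · simpa only [neg_mul, neg_zero] using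
      (tendsto_mul_mul_exp_neg_mul_atTop_nhds_zero a hb).neg
  · filter_upwards [eventually_gt_atTop 0] with x hx
    exact mul_neg_of_neg_of_pos (mul_neg_of_neg_of_pos (neg_neg_of_pos hx) ha) (exp_pos _)

theorem final_size_tendsto_zero_R_large (S₀ I₀ : ℝ) (W : ℝ → ℝ)
    (hS₀ : 0 < S₀) (hI₀ : 0 < I₀)
    (hW : ∀ x ∈ Set.Ioo (-Real.exp (-1)) 0,
      W x ∈ Set.Ioo (-1:ℝ) 0 ∧ W x * Real.exp (W x) = x) :
    Filter.Tendsto (fun R : ℝ => -W (-R * S₀ * Real.exp (-R * (S₀ + I₀))) / R)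
      Filter.atTop (nhds 0) := by
  have harg : ∀ᶠ R : ℝ in atTop, -R * S₀ * exp (-R * (S₀ + I₀)) ∈ Ioo (-exp (-1)) 0 :=
    tendsto_neg_mul_mul_exp_neg_mul_atTop_nhdsLT_zero hS₀ (by linarith)
      (Ioo_mem_nhdsLT (by simpa using exp_pos (-1)))
  have hWarg : ∀ᶠ R : ℝ in atTop, W (-R * S₀ * exp (-R * (S₀ + I₀))) ∈ Ioo (-1 : ℝ) 0 :=
    harg.mono fun R hR => (hW _ hR).1
  refine tendsto_bdd_div_atTop_nhds_zero (b := 0) (B := 1) ?_ ?_ tendsto_id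
  · filter_upwards [hWarg] with R hR
    linarith [hR.2]
  · filter_upwards [hWarg] with R hR
    linarith [hR.1]
end

section
/- If S₀ = 1/R and I₀ → 0⁺, then the final susceptible fraction tends to the herd immunity threshold: the solution s(I₀) ∈ (0, 1/R) of s = S₀·exp(-R·(S₀ + I₀ - s)) satisfies lim_{I₀→0⁺} s(I₀) = 1/R. -/
/-!
Writing `x = R s`, the final-size equation becomes `x - 1 - log x = R I₀`. The left-hand side is
nonnegative, decreasing on `(0, 1]` and vanishes only at `x = 1`, so as `R I₀ → 0` the root
`x ∈ (0, 1)` is squeezed to `1`, i.e. `s → 1 / R`.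
-/

open Filter Topology Real Set

lemma antitoneOn_sub_log : AntitoneOn (fun x : ℝ => x - log x) (Ioc 0 1) := by
  rintro x ⟨hx, -⟩ a ⟨ha, ha1⟩ hxa
  have hlog : log (x / a) ≤ x / a - 1 := log_le_sub_one_of_pos (div_pos hx ha)
  rw [log_div hx.ne' ha.ne'] at hlog
  have hdiv : x / a - 1 = -((a - x) / a) := by field_simp; ring
  have hgap : a - x ≤ (a - x) / a :=
    (le_div_iff₀ ha).2 (mul_le_of_le_one_right (sub_nonneg.2 hxa) ha1)
  show a - log a ≤ x - log x
  linarith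

lemma tendsto_one_of_tendsto_sub_one_sub_log {α : Type*} {l : Filter α} {x : α → ℝ}
    (hx : ∀ᶠ t in l, x t ∈ Ioo 0 1)
    (hlim : Tendsto (fun t => x t - 1 - log (x t)) l (𝓝 0)) :
    Tendsto x l (𝓝 1) := by
  refine tendsto_order.2 ⟨fun a ha => ?_, fun b hb => ?_⟩
  · rcases le_or_gt a 0 with ha0 | ha0
    · filter_upwards [hx] with t ht using ha0.trans_lt ht.1
    have hgap : 0 < a - 1 - log a := by
      linarith [log_lt_sub_one_of_pos ha0 ha.ne]
    filter_upwards [hx, hlim.eventually (gt_mem_nhds hgap)] with t ht hlt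
    by_contra! hta
    linarith [antitoneOn_sub_log ⟨ht.1, ht.2.le⟩ ⟨ha0, ha.le⟩ hta]
  · filter_upwards [hx] with t ht using ht.2.trans hb

lemma sub_one_sub_log_eq_of_final_size {R s I : ℝ} (hR : 0 < R)
    (h : s = 1 / R * exp (-R * (1 / R + I - s))) :
    R * s - 1 - log (R * s) = R * I := by
  have hRs : R * s = exp (-R * (1 / R + I - s)) := by
    calc R * s = R * (1 / R * exp (-R * (1 / R + I - s))) := congrArg (R * ·) h
      _ = _ := by field_simp
  rw [hRs, log_exp, ← hRs]
  field_simp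
  ring

theorem final_size_tendsto_herd_immunity (R : ℝ) (hR : 1 < R) (s : ℝ → ℝ)
    (hs : ∀ I₀ > (0:ℝ), s I₀ ∈ Set.Ioo 0 (1 / R) ∧
      s I₀ = (1 / R) * Real.exp (-R * (1 / R + I₀ - s I₀))) :
    Filter.Tendsto s (nhdsWithin 0 (Set.Ioi 0)) (nhds (1 / R)) := by
  have hR0 : 0 < R := one_pos.trans hR
  have hpos : ∀ᶠ I₀ in 𝓝[>] (0 : ℝ), 0 < I₀ := self_mem_nhdsWithin
  have hRs : Tendsto (fun I₀ => R * s I₀) (𝓝[>] 0) (𝓝 1) := by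
    apply tendsto_one_of_tendsto_sub_one_sub_log
    · filter_upwards [hpos] with I₀ hI₀
      obtain ⟨⟨h0, h1⟩, -⟩ := hs I₀ hI₀
      exact ⟨by positivity, by rwa [lt_div_iff₀ hR0, mul_comm] at h1⟩
    · have hlin : Tendsto (fun I₀ => R * I₀) (𝓝[>] 0) (𝓝 0) := by
        simpa using ((continuous_const_mul R).tendsto 0).mono_left nhdsWithin_le_nhds
      refine hlin.congr' ?_
      filter_upwards [hpos] with I₀ hI₀
      exact (sub_one_sub_log_eq_of_final_size hR0 (hs I₀ hI₀).2).symm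
  simpa [hR0.ne'] using hRs.const_mul R⁻¹
end
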